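/- arXiv:1007.3919 — 3 statements merged into one kernel-verified Lean document; each statement's English description precedes it below -/
import Mathlib

section
/- Let n ≥ 1, 0 < α ≤ 1/2, 0 < γ < ω < 2α, 0 < r < 1, K > 0, 0 < c₀ < 1 and s₀, s₁ ≥ 0. Set G₀ = r + K s₀ and G₁ = G₀ + G₀^{1+γ−ω} (r^{2α(n+γ)/(n+ω)} + c₀ s₀)^{−1/(2α)} K s₁, and assume G₁ ≤ 1. There exists a constant C depending only on n such that every measurable function ψ : ℝ^n → ℝ satisfying, for some point x* ∈ ℝ^n, the concentration condition ∫_{ℝ^n} |ψ(x)| |x − x*|^ω dx ≤ G₁^{ω−γ} and the height condition ‖ψ‖_{L^∞} ≤ (r^{2α(n+γ)/(n+ω)} + c₀(s₀+s₁))^{−(n+ω)/(2α)} also satisfies ‖ψ‖_{L^1} ≤ C (r^{2α(n+γ)/(n+ω)} + c₀(s₀+s₁))^{−ω/(2α)}. -/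
/-!
Split the space at the ball of radius `ρ = A ^ (1 / (2α))` about `x*`, where
`A = r ^ (2α(n+γ)/(n+ω)) + c₀ (s₀ + s₁)`. On the ball the height condition gives
`∫ |ψ| ≤ A ^ (-(n+ω)/(2α)) |B_ρ| = |B_1| A ^ (-ω/(2α))`. Off the ball `|x - x*| ^ ω ≥ ρ ^ ω`, so the
concentration condition together with `G₁ ≤ 1` gives `∫ |ψ| ≤ ρ ^ (-ω) = A ^ (-ω/(2α))`.
-/

open MeasureTheory Metric Module

lemma le_rpow_neg_mul_mul_rpow {b ρ d ω : ℝ} (hb : 0 ≤ b) (hρ : 0 < ρ) (hω : 0 ≤ ω)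
    (hρd : ρ ≤ d) : b ≤ ρ ^ (-ω) * (b * d ^ ω) := by
  have hone : 1 ≤ ρ ^ (-ω) * d ^ ω := by
    rw [Real.rpow_neg hρ.le, ← div_eq_inv_mul, one_le_div (Real.rpow_pos_of_pos hρ ω)]
    exact Real.rpow_le_rpow hρ.le hρd hω
  calc b = b * 1 := (mul_one b).symm
    _ ≤ b * (ρ ^ (-ω) * d ^ ω) := mul_le_mul_of_nonneg_left hone hb
    _ = ρ ^ (-ω) * (b * d ^ ω) := by ring

theorem lintegral_ofReal_abs_le_ball_add_moment {E : Type*} [NormedAddCommGroup E]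
    [MeasurableSpace E] [OpensMeasurableSpace E] (μ : Measure E) (ψ : E → ℝ) (x₀ : E)
    {M ρ ω : ℝ} (hρ : 0 < ρ) (hω : 0 ≤ ω) (hψM : ∀ᵐ x ∂μ, |ψ x| ≤ M) :
    ∫⁻ x, ENNReal.ofReal |ψ x| ∂μ ≤
      ENNReal.ofReal M * μ (ball x₀ ρ) +
        ENNReal.ofReal (ρ ^ (-ω)) * ∫⁻ x, ENNReal.ofReal (|ψ x| * ‖x - x₀‖ ^ ω) ∂μ := by
  have hpointwise : ∀ᵐ x ∂μ, ENNReal.ofReal |ψ x| ≤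
      (ball x₀ ρ).indicator (fun _ ↦ ENNReal.ofReal M) x +
        ENNReal.ofReal (ρ ^ (-ω)) * ENNReal.ofReal (|ψ x| * ‖x - x₀‖ ^ ω) := by
    filter_upwards [hψM] with x hx
    by_cases hxρ : x ∈ ball x₀ ρ
    · rw [Set.indicator_of_mem hxρ]
      exact le_add_right (ENNReal.ofReal_le_ofReal hx)
    · rw [Set.indicator_of_notMem hxρ, zero_add, ← ENNReal.ofReal_mul (by positivity)]
      refine ENNReal.ofReal_le_ofReal (le_rpow_neg_mul_mul_rpow (abs_nonneg _) hρ hω ?_)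
      simpa [dist_eq_norm] using hxρ
  calc _ ≤ _ := lintegral_mono_ae hpointwise
    _ = _ := by
      rw [lintegral_add_left (measurable_const.indicator measurableSet_ball),
        lintegral_indicator_const measurableSet_ball,
        lintegral_const_mul' _ _ ENNReal.ofReal_ne_top]

lemma rpow_neg_add_div_mul_rpow_one_div_pow {A : ℝ} (hA : 0 < A) (d : ℕ) (β ω : ℝ) :
    A ^ (-((d + ω) / β)) * (A ^ (1 / β)) ^ d = A ^ (-(ω / β)) := by
  rw [← Real.rpow_natCast, ← Real.rpow_mul hA.le, ← Real.rpow_add hA]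
  ring_nf

theorem lintegral_ofReal_abs_le_of_height_of_concentration {E : Type*} [NormedAddCommGroup E]
    [NormedSpace ℝ E] [MeasurableSpace E] [BorelSpace E] [FiniteDimensional ℝ E]
    (μ : Measure E) [μ.IsAddHaarMeasure] (ψ : E → ℝ) (x₀ : E) {A β ω : ℝ} (hA : 0 < A)
    (hω : 0 ≤ ω) (hconc : ∫⁻ x, ENNReal.ofReal (|ψ x| * ‖x - x₀‖ ^ ω) ∂μ ≤ 1)
    (hheight : ∀ᵐ x ∂μ, |ψ x| ≤ A ^ (-((finrank ℝ E + ω) / β))) :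
    ∫⁻ x, ENNReal.ofReal |ψ x| ∂μ ≤
      ENNReal.ofReal (((μ (ball 0 1)).toReal + 1) * A ^ (-(ω / β))) := by
  set ρ := A ^ (1 / β)
  have hρ : 0 < ρ := Real.rpow_pos_of_pos hA _
  have hρω : ρ ^ (-ω) = A ^ (-(ω / β)) := by
    rw [← Real.rpow_mul hA.le]
    ring_nf
  have hball : μ (ball x₀ ρ) = ENNReal.ofReal (ρ ^ finrank ℝ E * (μ (ball 0 1)).toReal) := by
    rw [Measure.addHaar_ball_of_pos μ x₀ hρ, ENNReal.ofReal_mul (by positivity),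
      ENNReal.ofReal_toReal measure_ball_lt_top.ne]
  calc ∫⁻ x, ENNReal.ofReal |ψ x| ∂μ
      ≤ ENNReal.ofReal (A ^ (-((finrank ℝ E + ω) / β))) * μ (ball x₀ ρ) +
          ENNReal.ofReal (ρ ^ (-ω)) * 1 :=
        (lintegral_ofReal_abs_le_ball_add_moment μ ψ x₀ hρ hω hheight).trans
          (add_le_add_right (mul_le_mul_right hconc _) _)
    _ = ENNReal.ofReal (((μ (ball 0 1)).toReal + 1) * A ^ (-(ω / β))) := by
      rw [hball, mul_one, ← ENNReal.ofReal_mul (by positivity), ← ENNReal.ofReal_add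
        (by positivity) (by positivity), ← mul_assoc, rpow_neg_add_div_mul_rpow_one_div_pow hA,
        hρω]
      ring_nf
theorem second_L1_estimate_evolved_molecule_general (n : ℕ) :
    ∃ C : ℝ, 0 < C ∧
      ∀ (α γ ω r K c₀ s₀ s₁ : ℝ) (xs : EuclideanSpace ℝ (Fin n))
        (ψ : EuclideanSpace ℝ (Fin n) → ℝ),
        Measurable ψ →
        0 < α → α ≤ 1 / 2 → 0 < γ → γ < ω → ω < 2 * α →
        0 < r → r < 1 → 0 < K → 0 < c₀ → c₀ < 1 → 0 ≤ s₀ → 0 ≤ s₁ →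
        (r + K * s₀) +
            (r + K * s₀) ^ (1 + γ - ω) *
              (r ^ (2 * α * ((n : ℝ) + γ) / ((n : ℝ) + ω)) + c₀ * s₀) ^ (-(1 / (2 * α))) *
              (K * s₁) ≤ 1 →
        (∫⁻ x : EuclideanSpace ℝ (Fin n),
            ENNReal.ofReal (|ψ x| * ‖x - xs‖ ^ ω) ≤
          ENNReal.ofReal (((r + K * s₀) +
            (r + K * s₀) ^ (1 + γ - ω) *
              (r ^ (2 * α * ((n : ℝ) + γ) / ((n : ℝ) + ω)) + c₀ * s₀) ^ (-(1 / (2 * α))) *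
              (K * s₁)) ^ (ω - γ))) →
        (∀ᵐ x : EuclideanSpace ℝ (Fin n) ∂volume,
          |ψ x| ≤ (r ^ (2 * α * ((n : ℝ) + γ) / ((n : ℝ) + ω)) + c₀ * (s₀ + s₁)) ^
            (-(((n : ℝ) + ω) / (2 * α)))) →
        ∫⁻ x : EuclideanSpace ℝ (Fin n), ENNReal.ofReal |ψ x| ≤
          ENNReal.ofReal (C * (r ^ (2 * α * ((n : ℝ) + γ) / ((n : ℝ) + ω)) + c₀ * (s₀ + s₁)) ^
            (-(ω / (2 * α)))) := by
  refine ⟨(volume (ball (0 : EuclideanSpace ℝ (Fin n)) 1)).toReal + 1, by positivity, ?_⟩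
  intro α γ ω r K c₀ s₀ s₁ xs ψ _ hα _ hγ hγω _ hr _ hK hc₀ _ hs₀ hs₁ hG₁ hconc hheight
  have hA : 0 < r ^ (2 * α * ((n : ℝ) + γ) / ((n : ℝ) + ω)) + c₀ * (s₀ + s₁) := by positivity
  have hG₁_nonneg : 0 ≤ (r + K * s₀) +
      (r + K * s₀) ^ (1 + γ - ω) *
        (r ^ (2 * α * ((n : ℝ) + γ) / ((n : ℝ) + ω)) + c₀ * s₀) ^ (-(1 / (2 * α))) *
        (K * s₁) := by positivity
  refine lintegral_ofReal_abs_le_of_height_of_concentration volume ψ xs hA (by linarith)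
    (hconc.trans (ENNReal.ofReal_le_one.2 (Real.rpow_le_one hG₁_nonneg hG₁ (by linarith)))) ?_
  rwa [finrank_euclideanSpace_fin]

theorem second_L1_estimate_evolved_molecule (n : ℕ) (hn : 1 ≤ n) :
    ∃ C : ℝ, 0 < C ∧
      ∀ (α γ ω r K c₀ s₀ s₁ : ℝ) (xs : EuclideanSpace ℝ (Fin n))
        (ψ : EuclideanSpace ℝ (Fin n) → ℝ),
        Measurable ψ →
        0 < α → α ≤ 1 / 2 → 0 < γ → γ < ω → ω < 2 * α →
        0 < r → r < 1 → 0 < K → 0 < c₀ → c₀ < 1 → 0 ≤ s₀ → 0 ≤ s₁ →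
        (r + K * s₀) +
            (r + K * s₀) ^ (1 + γ - ω) *
              (r ^ (2 * α * ((n : ℝ) + γ) / ((n : ℝ) + ω)) + c₀ * s₀) ^ (-(1 / (2 * α))) *
              (K * s₁) ≤ 1 →
        (∫⁻ x : EuclideanSpace ℝ (Fin n),
            ENNReal.ofReal (|ψ x| * ‖x - xs‖ ^ ω) ≤
          ENNReal.ofReal (((r + K * s₀) +
            (r + K * s₀) ^ (1 + γ - ω) *
              (r ^ (2 * α * ((n : ℝ) + γ) / ((n : ℝ) + ω)) + c₀ * s₀) ^ (-(1 / (2 * α))) *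
              (K * s₁)) ^ (ω - γ))) →
        (∀ᵐ x : EuclideanSpace ℝ (Fin n) ∂volume,
          |ψ x| ≤ (r ^ (2 * α * ((n : ℝ) + γ) / ((n : ℝ) + ω)) + c₀ * (s₀ + s₁)) ^
            (-(((n : ℝ) + ω) / (2 * α)))) →
        ∫⁻ x : EuclideanSpace ℝ (Fin n), ENNReal.ofReal |ψ x| ≤
          ENNReal.ofReal (C * (r ^ (2 * α * ((n : ℝ) + γ) / ((n : ℝ) + ω)) + c₀ * (s₀ + s₁)) ^
            (-(ω / (2 * α)))) :=
  second_L1_estimate_evolved_molecule_general n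
end

section
/- Let n ≥ 1 and let α, ω be real numbers with 0 < ω < 2α ≤ 1. There exists a constant C = C(n, ω, α) > 0 with the following property: for every measurable function ψ : ℝ^n → ℝ, every x₀ ∈ ℝ^n and every x̄ ∈ ℝ^n such that ψ(y) ≤ ψ(x̄) for all y ∈ ℝ^n, ψ(x̄) > 0, and ∫_{ℝ^n} |ψ(y)| |y − x₀|^ω dy ≤ 1, one has ∫_{ℝ^n} (ψ(x̄) − ψ(y)) / |x̄ − y|^{n+2α} dy ≥ C ψ(x̄)^{1 + 2α/(n+ω)}. -/
/-!
On `B(x̄, R)` the kernel is at least `R^-(n+2α)`, and the weight bound gives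
`∫_{B(x₀, R/2)ᶜ} |ψ| ≤ (R/2)^-ω`. Since `ψ(x̄) - ψ ≥ ψ(x̄) - |ψ|`, integrating over
`B(x̄, R) \ B(x₀, R/2)`, a set of measure at least `|B(0,1)| R^n / 2`, bounds the dissipation below
by `R^-(n+2α) (ψ(x̄) |B(0,1)| R^n / 2 - (R/2)^-ω)`. Taking `R^(n+ω)` proportional to `1 / ψ(x̄)`
makes this `c ψ(x̄)^(1 + 2α/(n+ω))`.
-/

open MeasureTheory Metric Module

theorem sub_div_rpow_le_sub_div_norm_rpow {E : Type*} [NormedAddCommGroup E] {ψ : E → ℝ}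
    {x y : E} {R p : ℝ} (hmax : ∀ z, ψ z ≤ ψ x) (hy : ‖x - y‖ ≤ R) (hp : 0 ≤ p) :
    (ψ x - ψ y) / R ^ p ≤ (ψ x - ψ y) / ‖x - y‖ ^ p := by
  rcases eq_or_ne y x with rfl | hne
  · simp
  have hd : 0 < ‖x - y‖ := norm_pos_iff.mpr (sub_ne_zero.mpr hne.symm)
  exact div_le_div_of_nonneg_left (sub_nonneg.mpr (hmax y)) (by positivity)
    (Real.rpow_le_rpow hd.le hy hp)

theorem ofReal_mul_measure_le_setLIntegral_sub_add {X : Type*} [MeasurableSpace X]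
    (μ : Measure X) {f : X → ℝ} (hf : Measurable f) (M : ℝ) (s : Set X) :
    ENNReal.ofReal M * μ s ≤
      ∫⁻ y in s, ENNReal.ofReal (M - f y) ∂μ + ∫⁻ y in s, ENNReal.ofReal |f y| ∂μ := by
  rw [← setLIntegral_const]
  refine le_trans (lintegral_mono fun y ↦ ?_)
    (lintegral_add_left (measurable_const.sub hf).ennreal_ofReal _).le
  refine le_trans (ENNReal.ofReal_le_ofReal ?_) ENNReal.ofReal_add_le
  simp only [Pi.sub_apply]
  linarith [le_abs_self (f y)]

section

variable {E : Type*} [NormedAddCommGroup E] [MeasurableSpace E] [OpensMeasurableSpace E]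
  (μ : Measure E)

theorem setLIntegral_compl_ball_le_inv_rpow_mul_lintegral {f : E → ℝ} (x₀ : E) {r ω : ℝ}
    (hr : 0 < r) (hω : 0 ≤ ω) :
    ∫⁻ y in (ball x₀ r)ᶜ, ENNReal.ofReal |f y| ∂μ ≤
      ENNReal.ofReal (r ^ ω)⁻¹ * ∫⁻ y, ENNReal.ofReal (|f y| * ‖y - x₀‖ ^ ω) ∂μ := by
  rw [← lintegral_const_mul' _ _ ENNReal.ofReal_ne_top]
  refine le_trans (setLIntegral_mono' measurableSet_ball.compl fun y hy ↦ ?_)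
    (setLIntegral_le_lintegral _ _)
  have hry : r ^ ω ≤ ‖y - x₀‖ ^ ω := by
    refine Real.rpow_le_rpow hr.le ?_ hω
    simpa [dist_eq_norm] using hy
  rw [← ENNReal.ofReal_mul (by positivity)]
  refine ENNReal.ofReal_le_ofReal ?_
  rw [inv_mul_eq_div, le_div_iff₀ (by positivity)]
  exact mul_le_mul_of_nonneg_left hry (abs_nonneg _)

theorem ofReal_inv_rpow_mul_sub_le_lintegral_sub_div_norm_rpow {ψ : E → ℝ} {x₀ xb : E}
    {R r ω p : ℝ} (hψ : Measurable ψ) (hmax : ∀ y, ψ y ≤ ψ xb) (hp : 0 ≤ p) (hr : 0 < r)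
    (hω : 0 ≤ ω) :
    ENNReal.ofReal (R ^ p)⁻¹ * (ENNReal.ofReal (ψ xb) * μ (ball xb R \ ball x₀ r) -
        ENNReal.ofReal (r ^ ω)⁻¹ * ∫⁻ y, ENNReal.ofReal (|ψ y| * ‖y - x₀‖ ^ ω) ∂μ) ≤
      ∫⁻ y, ENNReal.ofReal ((ψ xb - ψ y) / ‖xb - y‖ ^ p) ∂μ := by
  set S := ball xb R \ ball x₀ r
  have hdefect : ENNReal.ofReal (ψ xb) * μ S -
      ENNReal.ofReal (r ^ ω)⁻¹ * ∫⁻ y, ENNReal.ofReal (|ψ y| * ‖y - x₀‖ ^ ω) ∂μ ≤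
      ∫⁻ y in S, ENNReal.ofReal (ψ xb - ψ y) ∂μ := by
    refine tsub_le_iff_right.2 <| (ofReal_mul_measure_le_setLIntegral_sub_add μ hψ _ S).trans ?_
    gcongr
    exact (lintegral_mono_set (Set.sdiff_subset_compl _ _)).trans
      (setLIntegral_compl_ball_le_inv_rpow_mul_lintegral μ x₀ hr hω)
  have hS : MeasurableSet S := measurableSet_ball.diff measurableSet_ball
  calc _ ≤ ENNReal.ofReal (R ^ p)⁻¹ * ∫⁻ y in S, ENNReal.ofReal (ψ xb - ψ y) ∂μ := by gcongr
    _ = ∫⁻ y in S, ENNReal.ofReal (R ^ p)⁻¹ * ENNReal.ofReal (ψ xb - ψ y) ∂μ :=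
      (lintegral_const_mul' _ _ ENNReal.ofReal_ne_top).symm
    _ ≤ ∫⁻ y in S, ENNReal.ofReal ((ψ xb - ψ y) / ‖xb - y‖ ^ p) ∂μ := by
      refine setLIntegral_mono' hS fun y hy ↦ ?_
      have hyR : ‖xb - y‖ ≤ R := by
        rw [← dist_eq_norm, dist_comm]
        exact (mem_ball.1 hy.1).le
      rw [← ENNReal.ofReal_mul' (sub_nonneg.2 (hmax y)), inv_mul_eq_div]
      exact ENNReal.ofReal_le_ofReal (sub_div_rpow_le_sub_div_norm_rpow hmax hyR hp)
    _ ≤ _ := setLIntegral_le_lintegral _ _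

end

-- `R` is chosen so that the tail term `((R/2)^ω)⁻¹` is half of the mass term `M R^d v / 2`.
theorem exists_pos_inv_rpow_mul_sub_eq {d : ℕ} {α ω M v : ℝ} (hd : 0 < (d : ℝ) + ω)
    (hM : 0 < M) (hv : 0 < v) :
    ∃ R > 0, (R ^ ((d : ℝ) + 2 * α))⁻¹ * (M * (R ^ d / 2 * v) - ((R / 2) ^ ω)⁻¹) =
      v / 4 * (2 ^ (ω + 2) / v) ^ (-(2 * α / (d + ω))) * M ^ (1 + 2 * α / (d + ω)) := by
  set β := 2 * α / (d + ω)
  set A : ℝ := 2 ^ (ω + 2) / v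
  have hA : 0 < A := by positivity
  set R := (A / M) ^ ((d + ω)⁻¹)
  have hR : 0 < R := by positivity
  have hRdω : R ^ d * R ^ ω = A / M := by
    rw [← Real.rpow_natCast, ← Real.rpow_add hR, ← Real.rpow_mul (by positivity),
      inv_mul_cancel₀ hd.ne', Real.rpow_one]
  have hR2α : R ^ (2 * α) = A ^ β / M ^ β := by
    rw [← Real.rpow_mul (by positivity), show (d + ω)⁻¹ * (2 * α) = β by ring,
      Real.div_rpow hA.le hM.le]
  have hRω : R ^ ω = A / M / R ^ d := by
    rw [← hRdω]
    field_simp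
  refine ⟨R, hR, ?_⟩
  rw [Real.rpow_add hR, Real.rpow_natCast, hR2α, Real.div_rpow hR.le zero_le_two, hRω,
    Real.rpow_neg hA.le, Real.rpow_add hM, Real.rpow_one]
  have h2 : (2 : ℝ) ^ (ω + 2) = 2 ^ ω * 4 := by
    rw [Real.rpow_add two_pos]
    norm_num
  simp only [A, h2]
  field_simp
  ring

section

variable {E : Type*} [NormedAddCommGroup E] [NormedSpace ℝ E] [MeasurableSpace E] [BorelSpace E]
  [FiniteDimensional ℝ E] [Nontrivial E] (μ : Measure E) [μ.IsAddHaarMeasure]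

theorem ofReal_pow_div_two_mul_le_addHaar_ball_sdiff_ball_half (x y : E) {R : ℝ} (hR : 0 < R) :
    ENNReal.ofReal (R ^ finrank ℝ E / 2) * μ (ball 0 1) ≤ μ (ball x R \ ball y (R / 2)) := by
  have hhalf : (R / 2) ^ finrank ℝ E ≤ R ^ finrank ℝ E / 2 := by
    rw [div_pow]
    gcongr
    exact le_self_pow₀ one_le_two finrank_pos.ne'
  calc _ ≤ ENNReal.ofReal (R ^ finrank ℝ E - (R / 2) ^ finrank ℝ E) * μ (ball 0 1) := by
        gcongr
        linarith
    _ = μ (ball x R) - μ (ball y (R / 2)) := by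
        rw [Measure.addHaar_ball_of_pos μ x hR, Measure.addHaar_ball_of_pos μ y (half_pos hR),
          ENNReal.ofReal_sub _ (by positivity), ENNReal.sub_mul fun _ _ ↦ measure_ball_lt_top.ne]
    _ ≤ μ (ball x R \ ball y (R / 2)) := le_measure_sdiff

theorem exists_pos_ofReal_mul_rpow_le_lintegral_sub_div_norm_rpow {α ω : ℝ} (hω : 0 ≤ ω)
    (hp : 0 ≤ (finrank ℝ E : ℝ) + 2 * α) :
    ∃ C > 0, ∀ (ψ : E → ℝ) (x₀ xb : E), Measurable ψ → (∀ y, ψ y ≤ ψ xb) → 0 < ψ xb →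
      (∫⁻ y, ENNReal.ofReal (|ψ y| * ‖y - x₀‖ ^ ω) ∂μ ≤ 1) →
      ENNReal.ofReal (C * ψ xb ^ (1 + 2 * α / ((finrank ℝ E : ℝ) + ω))) ≤
        ∫⁻ y, ENNReal.ofReal ((ψ xb - ψ y) / ‖xb - y‖ ^ ((finrank ℝ E : ℝ) + 2 * α)) ∂μ := by
  have hd : 0 < (finrank ℝ E : ℝ) + ω := by
    have : (0 : ℝ) < finrank ℝ E := Nat.cast_pos.2 finrank_pos
    linarith
  set v := (μ (ball 0 1)).toReal
  have hv : 0 < v := ENNReal.toReal_pos (measure_ball_pos μ 0 one_pos).ne' measure_ball_lt_top.ne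
  refine ⟨v / 4 * (2 ^ (ω + 2) / v) ^ (-(2 * α / ((finrank ℝ E : ℝ) + ω))), by positivity,
    fun ψ x₀ xb hψ hmax hM hW ↦ ?_⟩
  obtain ⟨R, hR, hReq⟩ := exists_pos_inv_rpow_mul_sub_eq (α := α) hd hM hv
  rw [← hReq]
  calc _ = ENNReal.ofReal (R ^ ((finrank ℝ E : ℝ) + 2 * α))⁻¹ *
        (ENNReal.ofReal (ψ xb) * (ENNReal.ofReal (R ^ finrank ℝ E / 2) * μ (ball 0 1)) -
          ENNReal.ofReal ((R / 2) ^ ω)⁻¹ * 1) := by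
        rw [mul_one, ENNReal.ofReal_mul (by positivity), ENNReal.ofReal_sub _ (by positivity),
          ENNReal.ofReal_mul hM.le, ENNReal.ofReal_mul (by positivity),
          ENNReal.ofReal_toReal measure_ball_lt_top.ne]
    _ ≤ ENNReal.ofReal (R ^ ((finrank ℝ E : ℝ) + 2 * α))⁻¹ *
        (ENNReal.ofReal (ψ xb) * μ (ball xb R \ ball x₀ (R / 2)) -
          ENNReal.ofReal ((R / 2) ^ ω)⁻¹ * ∫⁻ y, ENNReal.ofReal (|ψ y| * ‖y - x₀‖ ^ ω) ∂μ) := by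
        gcongr
        exact ofReal_pow_div_two_mul_le_addHaar_ball_sdiff_ball_half μ xb x₀ hR
    _ ≤ _ := ofReal_inv_rpow_mul_sub_le_lintegral_sub_div_norm_rpow μ hψ hmax hp (half_pos hR) hω

end

theorem dissipation_lower_bound_at_max_general (n : ℕ) (hn : 1 ≤ n) (α ω : ℝ)
    (hω : 0 < ω) (hωα : ω < 2 * α) :
    ∃ C : ℝ, 0 < C ∧
      ∀ (ψ : EuclideanSpace ℝ (Fin n) → ℝ) (x₀ xb : EuclideanSpace ℝ (Fin n)),
        Measurable ψ → (∀ y, ψ y ≤ ψ xb) → 0 < ψ xb →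
        (∫⁻ y : EuclideanSpace ℝ (Fin n),
            ENNReal.ofReal (|ψ y| * ‖y - x₀‖ ^ ω) ≤ 1) →
        ENNReal.ofReal (C * ψ xb ^ (1 + 2 * α / ((n : ℝ) + ω))) ≤
          ∫⁻ y : EuclideanSpace ℝ (Fin n),
            ENNReal.ofReal ((ψ xb - ψ y) / ‖xb - y‖ ^ ((n : ℝ) + 2 * α)) := by
  have : NeZero n := ⟨by omega⟩
  have hp : 0 ≤ (finrank ℝ (EuclideanSpace ℝ (Fin n)) : ℝ) + 2 * α := by
    rw [finrank_euclideanSpace_fin]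
    linarith [(Nat.cast_nonneg n : (0 : ℝ) ≤ n)]
  have h := exists_pos_ofReal_mul_rpow_le_lintegral_sub_div_norm_rpow
    (volume : Measure (EuclideanSpace ℝ (Fin n))) hω.le hp
  rwa [finrank_euclideanSpace_fin] at h

theorem dissipation_lower_bound_at_max (n : ℕ) (hn : 1 ≤ n) (α ω : ℝ)
    (hω : 0 < ω) (hωα : ω < 2 * α) (hα : 2 * α ≤ 1) :
    ∃ C : ℝ, 0 < C ∧
      ∀ (ψ : EuclideanSpace ℝ (Fin n) → ℝ) (x₀ xb : EuclideanSpace ℝ (Fin n)),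
        Measurable ψ → (∀ y, ψ y ≤ ψ xb) → 0 < ψ xb →
        (∫⁻ y : EuclideanSpace ℝ (Fin n),
            ENNReal.ofReal (|ψ y| * ‖y - x₀‖ ^ ω) ≤ 1) →
        ENNReal.ofReal (C * ψ xb ^ (1 + 2 * α / ((n : ℝ) + ω))) ≤
          ∫⁻ y : EuclideanSpace ℝ (Fin n),
            ENNReal.ofReal ((ψ xb - ψ y) / ‖xb - y‖ ^ ((n : ℝ) + 2 * α)) :=
  dissipation_lower_bound_at_max_general n hn α ω hω hωα
end

section
/- Let n ≥ 1 and 0 < α < 1/2. Let ϕ : ℝ^n → ℝ be bounded and Lipschitz, let R > 0 and set φ(x) = ϕ(x/R). Then there exists a constant C depending only on n and α such that for every integrable function A : ℝ^n → ℝ, ∫_{ℝ^n} ∫_{ℝ^n} |φ(x) − φ(y)| · |A(y)| / |x − y|^{n+2α} dy dx ≤ C (‖ϕ‖_{L^∞} + Lip(ϕ)) R^{−2α} ‖A‖_{L^1}. In particular the commutator [Λ^{2α}, φ]A satisfies ‖[Λ^{2α}, φ]A‖_{L^1} ≤ C (‖ϕ‖_{L^∞} + Lip(ϕ)) R^{−2α}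 ‖A‖_{L^1}. -/
/-!
An `L`-Lipschitz function bounded by `M` satisfies
`|ϕ (x / R) - ϕ (y / R)| ≤ (2 M + L) min (‖x - y‖ / R) 1`, so the double integral is dominated by
the convolution of `|A|` with `z ↦ min (‖z‖ / R) 1 / ‖z‖ ^ (n + 2α)`. Substituting `z = R w`, the
mass of this kernel is `R ^ (-2α)` times that of `k w = min ‖w‖ 1 / ‖w‖ ^ (n + 2α)`, which is
integrable: near `0` it is `‖w‖ ^ (-(n - 1 + 2α))` with `2α < 1`, at infinity `‖w‖ ^ (-(n + 2α))`
with `2α > 0`. Tonelli and translation invariance then bound the double integral by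
`(2 M + L) R ^ (-2α) (∫ k) ‖A‖₁`.
-/

open MeasureTheory Metric

theorem abs_sub_le_mul_min_dist_one {X : Type*} [PseudoMetricSpace X] {f : X → ℝ} {K : NNReal}
    {M : ℝ} (hf : LipschitzWith K f) (hM : ∀ x, |f x| ≤ M) (x y : X) :
    |f x - f y| ≤ (2 * M + K) * min (dist x y) 1 := by
  have hM0 : 0 ≤ M := (abs_nonneg _).trans (hM x)
  have hlip : |f x - f y| ≤ K * dist x y := by simpa [Real.dist_eq] using hf.dist_le_mul x y
  have hbdd : |f x - f y| ≤ 2 * M := by linarith [abs_sub (f x) (f y), hM x, hM y]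
  rcases le_total (dist x y) 1 with h | h
  · rw [min_eq_left h]
    nlinarith [dist_nonneg (x := x) (y := y)]
  · rw [min_eq_right h]
    linarith [K.coe_nonneg]

theorem lintegral_lintegral_sub_mul {G : Type*} [MeasurableSpace G] [AddGroup G]
    [MeasurableAdd₂ G] [MeasurableNeg G] {μ : Measure G} [SFinite μ] [μ.IsAddRightInvariant]
    {g a : G → ENNReal} (hg : Measurable g) (ha : AEMeasurable a μ) :
    ∫⁻ x, ∫⁻ y, g (x - y) * a y ∂μ ∂μ = (∫⁻ z, g z ∂μ) * ∫⁻ y, a y ∂μ := by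
  rw [lintegral_lintegral_swap ((hg.comp measurable_sub).aemeasurable.mul ha.comp_snd),
    ← lintegral_const_mul'' _ ha]
  refine lintegral_congr fun y ↦ ?_
  rw [lintegral_mul_const _ (by fun_prop), lintegral_sub_right_eq_self g y]

theorem abs_sub_comp_inv_smul_div_rpow_le {E : Type*} [NormedAddCommGroup E] [NormedSpace ℝ E]
    {f : E → ℝ} {K : NNReal} {M R : ℝ} (hf : LipschitzWith K f) (hM : ∀ x, |f x| ≤ M)
    (hR : 0 < R) (s : ℝ) (x y : E) :
    |f (R⁻¹ • x) - f (R⁻¹ • y)| / ‖x - y‖ ^ s ≤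
      (2 * M + K) * R ^ (-s) * (min ‖R⁻¹ • (x - y)‖ 1 / ‖R⁻¹ • (x - y)‖ ^ s) := by
  have hnorm : ‖x - y‖ ^ s = R ^ s * ‖R⁻¹ • (x - y)‖ ^ s := by
    rw [← Real.mul_rpow hR.le (norm_nonneg _), norm_smul,
      Real.norm_of_nonneg (inv_nonneg.2 hR.le), mul_inv_cancel_left₀ hR.ne']
  have hlip := abs_sub_le_mul_min_dist_one hf hM (R⁻¹ • x) (R⁻¹ • y)
  rw [dist_eq_norm, ← smul_sub] at hlip
  rw [hnorm]
  calc |f (R⁻¹ • x) - f (R⁻¹ • y)| / (R ^ s * ‖R⁻¹ • (x - y)‖ ^ s)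
      ≤ (2 * M + K) * min ‖R⁻¹ • (x - y)‖ 1 / (R ^ s * ‖R⁻¹ • (x - y)‖ ^ s) := by gcongr
    _ = _ := by rw [Real.rpow_neg hR.le]; ring

section HaarMeasure

variable {E : Type*} [NormedAddCommGroup E] [NormedSpace ℝ E] [FiniteDimensional ℝ E]
  [MeasurableSpace E] [BorelSpace E] {μ : Measure E} [μ.IsAddHaarMeasure]

theorem integrable_min_norm_one_div_rpow (hd : 1 ≤ Module.finrank ℝ E) {s : ℝ}
    (hs : Module.finrank ℝ E < s) (hs' : s < Module.finrank ℝ E + 1) :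
    Integrable (fun z : E ↦ min ‖z‖ 1 / ‖z‖ ^ s) μ := by
  have hmeas : AEStronglyMeasurable (fun z : E ↦ min ‖z‖ 1 / ‖z‖ ^ s) μ :=
    (by fun_prop : Measurable _).aestronglyMeasurable
  have hs1 : 1 < s := by
    have : (1 : ℝ) ≤ Module.finrank ℝ E := by exact_mod_cast hd
    linarith
  rw [← integrableOn_univ, ← Set.union_compl_self (ball 0 1), integrableOn_union]
  constructor
  · refine integrableOn_ball_of_norm_le_rpow hd (α := s - 1) (C := 1) (by linarith)
      (ae_of_all _ fun z ↦ ?_) hmeas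
    rw [one_mul, Real.norm_of_nonneg (by positivity), neg_sub,
      Real.rpow_sub' (norm_nonneg z) (by linarith), Real.rpow_one]
    gcongr
    exact min_le_left _ _
  · refine Integrable.mono' ((integrable_one_add_norm hs).const_mul (2 ^ s)).integrableOn
      hmeas.restrict (ae_restrict_of_forall_mem measurableSet_ball.compl fun z hz ↦ ?_)
    have hz : 1 ≤ ‖z‖ := by simpa using hz
    rw [Real.norm_of_nonneg (by positivity), min_eq_right hz]
    calc 1 / ‖z‖ ^ s = 2 ^ s / (2 * ‖z‖) ^ s := by
          rw [Real.mul_rpow (by norm_num) (norm_nonneg z)]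
          field_simp
      _ ≤ 2 ^ s / (1 + ‖z‖) ^ s := by gcongr; linarith
      _ = 2 ^ s * (1 + ‖z‖) ^ (-s) := by rw [Real.rpow_neg (by positivity), div_eq_mul_inv]

theorem lintegral_ofReal_comp_inv_smul {f : E → ℝ} (hf : Integrable f μ) (hf0 : ∀ z, 0 ≤ f z) {R : ℝ}
    (hR : 0 < R) :
    ∫⁻ z, ENNReal.ofReal (f (R⁻¹ • z)) ∂μ = ENNReal.ofReal (R ^ Module.finrank ℝ E * ∫ z, f z ∂μ) := by
  rw [← ofReal_integral_eq_lintegral_ofReal (hf.comp_smul (inv_ne_zero hR.ne'))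
    (ae_of_all _ fun z ↦ hf0 (R⁻¹ • z)), Measure.integral_comp_inv_smul_of_nonneg μ f hR.le, smul_eq_mul]

theorem lintegral_commutator_kernel_le {f : E → ℝ} {K : NNReal} {M R s : ℝ}
    (hf : LipschitzWith K f) (hM : ∀ x, |f x| ≤ M) (hR : 0 < R)
    (hk : Integrable (fun z : E ↦ min ‖z‖ 1 / ‖z‖ ^ s) μ) {A : E → ℝ} (hA : Integrable A μ) :
    ∫⁻ x, ∫⁻ y, ENNReal.ofReal (|f (R⁻¹ • x) - f (R⁻¹ • y)| * |A y| / ‖x - y‖ ^ s) ∂μ ∂μ ≤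
      ENNReal.ofReal ((2 * M + K) * R ^ ((Module.finrank ℝ E : ℝ) - s) *
        (∫ z, min ‖z‖ 1 / ‖z‖ ^ s ∂μ) * ∫ y, |A y| ∂μ) := by
  have hM0 : 0 ≤ M := (abs_nonneg _).trans (hM 0)
  set k : E → ℝ := fun z ↦ min ‖z‖ 1 / ‖z‖ ^ s
  set c := (2 * M + K) * R ^ (-s)
  have hck : Integrable (fun z ↦ c * k z) μ := hk.const_mul c
  calc _ ≤ ∫⁻ x, ∫⁻ y, ENNReal.ofReal (c * k (R⁻¹ • (x - y))) * ENNReal.ofReal |A y| ∂μ ∂μ := by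
        refine lintegral_mono fun x ↦ lintegral_mono fun y ↦ ?_
        rw [← ENNReal.ofReal_mul (by positivity), mul_div_right_comm]
        gcongr
        simpa only [c, k, mul_assoc] using abs_sub_comp_inv_smul_div_rpow_le hf hM hR s x y
    _ = ENNReal.ofReal (R ^ Module.finrank ℝ E * ∫ z, c * k z ∂μ) *
          ENNReal.ofReal (∫ y, |A y| ∂μ) := by
        rw [lintegral_lintegral_sub_mul (g := fun z ↦ ENNReal.ofReal (c * k (R⁻¹ • z)))
          (by fun_prop) (by fun_prop), lintegral_ofReal_comp_inv_smul hck
          (fun z ↦ by positivity) hR, ofReal_integral_eq_lintegral_ofReal hA.abs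
          (ae_of_all _ fun y ↦ abs_nonneg _)]
    _ = _ := by
        rw [← ENNReal.ofReal_mul (by positivity), integral_const_mul, Real.rpow_sub hR,
          Real.rpow_natCast]
        simp only [c, Real.rpow_neg hR.le]
        ring_nf

end HaarMeasure

theorem commutator_L1_estimate (n : ℕ) (hn : 1 ≤ n) (α : ℝ)
    (hα : 0 < α) (hα' : α < 1 / 2) :
    ∃ C : ℝ, 0 < C ∧
      ∀ (ϕ : EuclideanSpace ℝ (Fin n) → ℝ) (L M : ℝ), 0 ≤ L →
        LipschitzWith (Real.toNNReal L) ϕ → (∀ x, |ϕ x| ≤ M) →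
        ∀ (R : ℝ), 0 < R →
        ∀ (A : EuclideanSpace ℝ (Fin n) → ℝ), Measurable A → Integrable A →
          ∫⁻ x : EuclideanSpace ℝ (Fin n), ∫⁻ y : EuclideanSpace ℝ (Fin n),
              ENNReal.ofReal (|ϕ (R⁻¹ • x) - ϕ (R⁻¹ • y)| * |A y| /
                ‖x - y‖ ^ ((n : ℝ) + 2 * α)) ≤
            ENNReal.ofReal (C * (M + L) * R ^ (-(2 * α)) *
              ∫ y : EuclideanSpace ℝ (Fin n), |A y|) := by
  set s : ℝ := n + 2 * α
  have hk : Integrable (fun z : EuclideanSpace ℝ (Fin n) ↦ min ‖z‖ 1 / ‖z‖ ^ s) :=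
    integrable_min_norm_one_div_rpow (by simpa using hn) (by simp [s]; linarith)
      (by simp [s]; linarith)
  set I := ∫ z : EuclideanSpace ℝ (Fin n), min ‖z‖ 1 / ‖z‖ ^ s
  have hI : 0 ≤ I := integral_nonneg fun z ↦ by positivity
  refine ⟨2 * I + 1, by positivity, fun ϕ L M hL hϕ hM R hR A _ hA ↦ ?_⟩
  have hM0 : 0 ≤ M := (abs_nonneg _).trans (hM 0)
  refine (lintegral_commutator_kernel_le hϕ hM hR hk hA).trans (ENNReal.ofReal_le_ofReal ?_)
  rw [Real.coe_toNNReal L hL, finrank_euclideanSpace_fin, show (n : ℝ) - s = -(2 * α) by ring]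
  calc (2 * M + L) * R ^ (-(2 * α)) * I * ∫ y, |A y|
      = (2 * M + L) * I * (R ^ (-(2 * α)) * ∫ y, |A y|) := by ring
    _ ≤ (2 * I + 1) * (M + L) * (R ^ (-(2 * α)) * ∫ y, |A y|) := by
        gcongr ?_ * _
        nlinarith
    _ = _ := by ring
end
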